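/- Let A be a commutative noetherian ring and f: M → N a homomorphism of finitely generated A-modules. If the maps G_f(P): G_M(P) → G_N(P) are injective for every finitely generated A-module P, then the induced map R(f): R(M) → R(N) of Rees algebras is injective (equivalently, the preimage of I(N) under Sym(f) equals I(M)). -/

import Mathlib

open Module LinearMap TensorProduct

/-- The relation on the tensor algebra whose quotient is the symmetric algebra. -/
inductive SymRel (A : Type) [CommRing A] (M : Type) [AddCommGroup M] [Module A M] :
    TensorAlgebra A M → TensorAlgebra A M → Prop
  | mul_comm (x y : M) : SymRel A M (TensorAlgebra.ι A x * TensorAlgebra.ι A y)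
      (TensorAlgebra.ι A y * TensorAlgebra.ι A x)

/-- The symmetric algebra `Sym(M)` of a module `M`. -/
abbrev SymmAlg (A : Type) [CommRing A] (M : Type) [AddCommGroup M] [Module A M] : Type :=
  RingQuot (SymRel A M)

variable {A : Type} [CommRing A] {M N L : Type} [AddCommGroup M] [Module A M]
  [AddCommGroup N] [Module A N] [AddCommGroup L] [Module A L]

private lemma symmAlg_comm_aux (x y : TensorAlgebra A M) :
    RingQuot.mkAlgHom A (SymRel A M) x * RingQuot.mkAlgHom A (SymRel A M) y =
      RingQuot.mkAlgHom A (SymRel A M) y * RingQuot.mkAlgHom A (SymRel A M) x := by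
  induction x using TensorAlgebra.induction with
  | algebraMap r => simp [Algebra.commutes]
  | ι m =>
    induction y using TensorAlgebra.induction with
    | algebraMap r => simp [Algebra.commutes]
    | ι n => simpa [map_mul] using (RingQuot.mkAlgHom_rel A (SymRel.mul_comm m n))
    | mul a b ha hb => rw [map_mul, ← mul_assoc, ha, mul_assoc, hb, ← mul_assoc]
    | add a b ha hb => rw [map_add, mul_add, add_mul, ha, hb]
  | mul a b ha hb => rw [map_mul, mul_assoc, hb, ← mul_assoc, ha, mul_assoc]
  | add a b ha hb => rw [map_add, add_mul, mul_add, ha, hb]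

noncomputable instance (A : Type) [CommRing A] (M : Type) [AddCommGroup M] [Module A M] :
    CommRing (SymmAlg A M) :=
  { (inferInstance : Ring (SymmAlg A M)) with
    mul_comm := fun a b => by
      obtain ⟨x, rfl⟩ := RingQuot.mkAlgHom_surjective A (SymRel A M) a
      obtain ⟨y, rfl⟩ := RingQuot.mkAlgHom_surjective A (SymRel A M) b
      exact symmAlg_comm_aux x y }

/-- The canonical inclusion of `M` into the degree-one part of `Sym(M)`. -/
noncomputable def symι (A : Type) [CommRing A] {M : Type} [AddCommGroup M] [Module A M] :
    M →ₗ[A] SymmAlg A M :=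
  (RingQuot.mkAlgHom A (SymRel A M)).toLinearMap ∘ₗ TensorAlgebra.ι A

/-- Functoriality of the symmetric algebra: `Sym(g) : Sym(M) → Sym(N)`. -/
noncomputable def symMap (A : Type) [CommRing A] {M N : Type} [AddCommGroup M] [Module A M]
    [AddCommGroup N] [Module A N] (g : M →ₗ[A] N) : SymmAlg A M →ₐ[A] SymmAlg A N :=
  RingQuot.liftAlgHom A ⟨TensorAlgebra.lift A ((symι A) ∘ₗ g), by
    intro x y h
    cases h with
    | mul_comm a b => simp [mul_comm]⟩

@[simp] lemma symMap_ι (g : M →ₗ[A] N) (m : M) :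
    symMap A g (symι A m) = symι A (g m) := by
  simp [symMap, symι, RingQuot.liftAlgHom_mkAlgHom_apply]

lemma symmAlg_hom_ext {B : Type} [Semiring B] [Algebra A B] {f g : SymmAlg A M →ₐ[A] B}
    (h : ∀ m : M, f (symι A m) = g (symι A m)) : f = g := by
  have key : f.comp (RingQuot.mkAlgHom A (SymRel A M)) =
      g.comp (RingQuot.mkAlgHom A (SymRel A M)) := by
    apply TensorAlgebra.hom_ext
    apply LinearMap.ext
    intro m
    simpa [symι] using h m
  apply AlgHom.ext
  intro x
  obtain ⟨x, rfl⟩ := RingQuot.mkAlgHom_surjective A (SymRel A M) x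
  exact AlgHom.congr_fun key x

lemma symMap_comp_apply (g : N →ₗ[A] L) (f : M →ₗ[A] N) (x : SymmAlg A M) :
    symMap A (g ∘ₗ f) x = symMap A g (symMap A f x) := by
  have : symMap A (g ∘ₗ f) = (symMap A g).comp (symMap A f) := by
    apply symmAlg_hom_ext
    intro m
    simp
  rw [this]; rfl

/-- The data of a linear map from `M` into a finitely generated free module. -/
structure FreeTarget (A : Type) [CommRing A] (M : Type) [AddCommGroup M] [Module A M] where
  E : Type
  [instAddCommGroup : AddCommGroup E]
  [instModule : Module A E]
  [instFree : Module.Free A E]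
  [instFinite : Module.Finite A E]
  g : M →ₗ[A] E

attribute [instance] FreeTarget.instAddCommGroup FreeTarget.instModule
  FreeTarget.instFree FreeTarget.instFinite

/-- The ideal `I(M) ⊆ Sym(M)`: the intersection over all maps `g : M → E` into finitely
generated free modules of the kernels of `Sym(g)`. -/
noncomputable def reesIdeal (A : Type) [CommRing A] (M : Type) [AddCommGroup M]
    [Module A M] : Ideal (SymmAlg A M) :=
  ⨅ d : FreeTarget A M, RingHom.ker (symMap A d.g)

lemma reesIdeal_le_comap (f : M →ₗ[A] N) :
    reesIdeal A M ≤ Ideal.comap (symMap A f) (reesIdeal A N) := by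
  intro x hx
  simp only [reesIdeal, Ideal.mem_iInf] at hx
  simp only [Ideal.mem_comap, reesIdeal, Ideal.mem_iInf]
  intro d
  have hd := hx ⟨d.E, d.g ∘ₗ f⟩
  rw [RingHom.mem_ker] at hd ⊢
  rw [← symMap_comp_apply]
  exact hd

/-- The Rees algebra `R(M) = Sym(M)/I(M)` of a module `M`. -/
noncomputable abbrev ReesAlg (A : Type) [CommRing A] (M : Type) [AddCommGroup M]
    [Module A M] : Type :=
  SymmAlg A M ⧸ reesIdeal A M

/-- The induced map `R(f) : R(M) → R(N)` of Rees algebras. -/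
noncomputable def reesMap (A : Type) [CommRing A] {M N : Type} [AddCommGroup M]
    [Module A M] [AddCommGroup N] [Module A N] (f : M →ₗ[A] N) :
    ReesAlg A M →ₐ[A] ReesAlg A N :=
  Ideal.quotientMapₐ (reesIdeal A N) (symMap A f) (reesIdeal_le_comap f)

open Module LinearMap TensorProduct

/-- The natural map `α_{M,P} : M ⊗ P → Hom(M*, P)`, `α(m ⊗ p)(λ) = λ(m) • p`. -/
noncomputable def alphaMap (A : Type) [CommRing A] (M P : Type) [AddCommGroup M]
    [Module A M] [AddCommGroup P] [Module A P] :
    M ⊗[A] P →ₗ[A] (Module.Dual A M →ₗ[A] P) :=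
  (dualTensorHom A (Module.Dual A M) P) ∘ₗ
    (TensorProduct.map (Module.Dual.eval A M) LinearMap.id)

/-- `G_M(P)` is the image of `α_{M,P} : M ⊗ P → Hom(M*, P)`. -/
noncomputable def GFun (A : Type) [CommRing A] (M P : Type) [AddCommGroup M] [Module A M]
    [AddCommGroup P] [Module A P] : Submodule A (Module.Dual A M →ₗ[A] P) :=
  LinearMap.range (alphaMap A M P)

/-!
Injectivity of every `G_f(P)` forces `f* : N* → M*` to be surjective. Take generators
`m₁, …, mᵣ` of `M` and the test module `P = Aʳ / {(ν(f mᵢ))ᵢ : ν ∈ N*}`: the element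
`∑ mᵢ ⊗ eᵢ` of `M ⊗ P` is sent to `0` by `G_f(P)`, hence already vanishes in `G_M(P)`, which
says that every `λ ∈ M*` agrees on the generators with some `ν ∘ f`. Surjectivity of `f*` makes
every map from `M` to a finitely generated free module factor through `f`, so an element of
`Sym(M)` killed by all such maps after applying `Sym(f)` is already killed by them.
-/

section ReesMap

variable {ι P E : Type} [AddCommGroup P] [Module A P] [AddCommGroup E] [Module A E]

noncomputable def evalFamily (m : ι → M) : Module.Dual A M →ₗ[A] (ι → A) :=
  LinearMap.pi fun i => Module.Dual.eval A M (m i)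

lemma evalFamily_injective {m : ι → M} (hm : Submodule.span A (Set.range m) = ⊤) :
    Function.Injective (evalFamily (A := A) m) := by
  rw [← LinearMap.ker_eq_bot, LinearMap.ker_eq_bot']
  intro lam hlam
  exact LinearMap.ext_on_range hm fun i => congrFun hlam i

lemma alphaMap_sum_tmul_single [Fintype ι] [DecidableEq ι] (m : ι → M)
    (q : (ι → A) →ₗ[A] P) :
    alphaMap A M P (∑ i, m i ⊗ₜ[A] q (Pi.single i 1)) = q ∘ₗ evalFamily m := by
  ext lam
  conv_rhs => rw [LinearMap.comp_apply, pi_eq_sum_univ' (evalFamily m lam)]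
  simp [alphaMap, evalFamily]

lemma dualMap_surjective_of_injOn_GFun [Module.Finite A M] (f : M →ₗ[A] N)
    (h : ∀ (P : Type) [AddCommGroup P] [Module A P] [Module.Finite A P],
      Set.InjOn (LinearMap.lcomp A P f.dualMap) (GFun A M P)) :
    Function.Surjective f.dualMap := by
  classical
  obtain ⟨r, m, hm⟩ := Module.Finite.exists_fin (R := A) (M := M)
  set s := LinearMap.range (evalFamily m ∘ₗ f.dualMap)
  set t : M ⊗[A] ((Fin r → A) ⧸ s) := ∑ i, m i ⊗ₜ[A] s.mkQ (Pi.single i 1)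
  have ht : alphaMap A M _ t = s.mkQ ∘ₗ evalFamily m := alphaMap_sum_tmul_single m s.mkQ
  have hkill : LinearMap.lcomp A _ f.dualMap (alphaMap A M _ t) = 0 := by
    ext ν
    simp [ht, Submodule.Quotient.mk_eq_zero, s]
  have ht0 : alphaMap A M _ t = 0 :=
    h _ ⟨t, rfl⟩ (GFun A M _).zero_mem (by rwa [map_zero])
  intro lam
  have hlam : evalFamily m lam ∈ s := by
    rw [← Submodule.Quotient.mk_eq_zero, ← Submodule.mkQ_apply, ← LinearMap.comp_apply, ← ht,
      ht0, LinearMap.zero_apply]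
  obtain ⟨ν, hν⟩ := hlam
  exact ⟨ν, evalFamily_injective hm hν⟩

lemma exists_comp_eq_of_dualMap_surjective [Module.Free A E] [Module.Finite A E]
    {f : M →ₗ[A] N} (hf : Function.Surjective f.dualMap) (g : M →ₗ[A] E) :
    ∃ g' : N →ₗ[A] E, g' ∘ₗ f = g := by
  let b := Module.Free.chooseBasis A E
  choose ν hν using fun i => hf (b.coord i ∘ₗ g)
  refine ⟨b.equivFun.symm.toLinearMap ∘ₗ LinearMap.pi ν, ?_⟩
  refine (b.equivFun.toLinearMap.cancel_left b.equivFun.injective).mp ?_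
  ext x i
  simp only [LinearMap.comp_apply, LinearEquiv.coe_coe, LinearEquiv.apply_symm_apply,
    LinearMap.pi_apply, Basis.equivFun_apply]
  simpa using congrArg (fun φ : Module.Dual A M => φ x) (hν i)

lemma comap_reesIdeal_eq_of_forall_exists_comp_eq (f : M →ₗ[A] N)
    (hf : ∀ d : FreeTarget A M, ∃ g' : N →ₗ[A] d.E, g' ∘ₗ f = d.g) :
    Ideal.comap (symMap A f) (reesIdeal A N) = reesIdeal A M := by
  refine le_antisymm (fun x hx => ?_) (reesIdeal_le_comap f)
  simp only [Ideal.mem_comap, reesIdeal, Ideal.mem_iInf, RingHom.mem_ker] at hx ⊢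
  intro d
  obtain ⟨g', hg'⟩ := hf d
  rw [← hg', symMap_comp_apply]
  exact hx ⟨d.E, g'⟩

lemma reesMap_injective_of_comap_le (f : M →ₗ[A] N)
    (hf : Ideal.comap (symMap A f) (reesIdeal A N) ≤ reesIdeal A M) :
    Function.Injective (reesMap A f) :=
  Ideal.quotientMap_injective' (H := reesIdeal_le_comap f) hf

end ReesMap

theorem stmt17_general (A : Type) [CommRing A]
    (M N : Type) [AddCommGroup M] [Module A M] [Module.Finite A M]
    [AddCommGroup N] [Module A N]
    (f : M →ₗ[A] N)
    (h : ∀ (P : Type) [AddCommGroup P] [Module A P] [Module.Finite A P],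
      Set.InjOn (LinearMap.lcomp A P f.dualMap) (GFun A M P)) :
    Function.Injective (reesMap A f) ∧
      Ideal.comap (symMap A f) (reesIdeal A N) = reesIdeal A M := by
  have hsurj := dualMap_surjective_of_injOn_GFun f h
  have hcomap := comap_reesIdeal_eq_of_forall_exists_comp_eq f fun d =>
    exists_comp_eq_of_dualMap_surjective hsurj d.g
  exact ⟨reesMap_injective_of_comap_le f hcomap.le, hcomap⟩

/-- If the maps `G_f(P) : G_M(P) → G_N(P)` are injective for every finitely generated
`P`, then `R(f) : R(M) → R(N)` is injective (equivalently, the preimage of `I(N)` under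
`Sym(f)` is `I(M)`). -/
theorem stmt17 (A : Type) [CommRing A] [IsNoetherianRing A]
    (M N : Type) [AddCommGroup M] [Module A M] [Module.Finite A M]
    [AddCommGroup N] [Module A N] [Module.Finite A N]
    (f : M →ₗ[A] N)
    (h : ∀ (P : Type) [AddCommGroup P] [Module A P] [Module.Finite A P],
      Set.InjOn (LinearMap.lcomp A P f.dualMap) (GFun A M P)) :
    Function.Injective (reesMap A f) ∧
      Ideal.comap (symMap A f) (reesIdeal A N) = reesIdeal A M :=
  stmt17_general A M N f h
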